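/- Let G be a topological gyrogroup and H a second-countable closed L-subgyrogroup of G. If the quotient space G/H is second-countable, then G is second-countable. -/
import Mathlib


universe u v

/-- A gyrogroup: a set with a binary operation `add`, a (unique) two-sided identity `zero`,
(unique) two-sided inverses `neg`, and gyroautomorphisms `gyr x y` satisfying the left
gyroassociative law and the left loop property. -/
class Gyrogroup (G : Type u) where
  add : G → G → G
  zero : G
  neg : G → G
  gyr : G → G → G → G
  zero_add : ∀ a : G, add zero a = a
  add_zero : ∀ a : G, add a zero = a
  zero_unique : ∀ z : G, (∀ a : G, add z a = a ∧ add a z = a) → z = zero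
  neg_add : ∀ a : G, add (neg a) a = zero
  add_neg : ∀ a : G, add a (neg a) = zero
  neg_unique : ∀ x y : G, add y x = zero → add x y = zero → y = neg x
  gyr_bijective : ∀ x y : G, Function.Bijective (gyr x y)
  gyr_add : ∀ x y a b : G, gyr x y (add a b) = add (gyr x y a) (gyr x y b)
  gyr_assoc : ∀ x y z : G, add x (add y z) = add (add x y) (gyr x y z)
  gyr_left_loop : ∀ x y : G, gyr (add x y) y = gyr x y

/-- A topological gyrogroup: a gyrogroup with a Hausdorff topology making the operation
jointly continuous and the inversion continuous. -/
def IsTopologicalGyrogroup (G : Type u) [TopologicalSpace G] [Gyrogroup G] : Prop :=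
  T2Space G ∧ Continuous (fun p : G × G => Gyrogroup.add p.1 p.2) ∧
    Continuous (Gyrogroup.neg : G → G)

/-- A strongly topological gyrogroup: a topological gyrogroup admitting a neighborhood
base `𝒰` at `0` each member of which is invariant under all gyrations. -/
def IsStronglyTopologicalGyrogroup (G : Type u) [TopologicalSpace G] [Gyrogroup G] : Prop :=
  IsTopologicalGyrogroup G ∧
    ∃ 𝒰 : Set (Set G),
      (∀ U ∈ 𝒰, U ∈ nhds (Gyrogroup.zero : G)) ∧
      (∀ V ∈ nhds (Gyrogroup.zero : G), ∃ U ∈ 𝒰, U ⊆ V) ∧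
      (∀ U ∈ 𝒰, ∀ x y : G, Gyrogroup.gyr x y '' U = U)

/-- Left ω-narrow: every open neighborhood `V` of `0` satisfies `G = A ⊕ V`
for some countable `A`. -/
def LeftOmegaNarrow (G : Type u) [TopologicalSpace G] [Gyrogroup G] : Prop :=
  ∀ V : Set G, IsOpen V → (Gyrogroup.zero : G) ∈ V →
    ∃ A : Set G, A.Countable ∧ Set.image2 Gyrogroup.add A V = Set.univ

/-- Right ω-narrow: every open neighborhood `V` of `0` satisfies `G = V ⊕ A`
for some countable `A`. -/
def RightOmegaNarrow (G : Type u) [TopologicalSpace G] [Gyrogroup G] : Prop :=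
  ∀ V : Set G, IsOpen V → (Gyrogroup.zero : G) ∈ V →
    ∃ A : Set G, A.Countable ∧ Set.image2 Gyrogroup.add V A = Set.univ

/-- ω-narrow: both left and right ω-narrow. -/
def OmegaNarrow (G : Type u) [TopologicalSpace G] [Gyrogroup G] : Prop :=
  LeftOmegaNarrow G ∧ RightOmegaNarrow G

/-- A subgyrogroup: a nonempty subset forming a gyrogroup under the inherited operation,
the restriction of each `gyr a b` (for `a b ∈ H`) being an automorphism of `H`. -/
structure IsSubgyrogroup (G : Type u) [Gyrogroup G] (H : Set G) : Prop where
  nonempty : H.Nonempty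
  zero_mem : (Gyrogroup.zero : G) ∈ H
  add_mem : ∀ a ∈ H, ∀ b ∈ H, Gyrogroup.add a b ∈ H
  neg_mem : ∀ a ∈ H, Gyrogroup.neg a ∈ H
  gyr_image : ∀ a ∈ H, ∀ b ∈ H, Gyrogroup.gyr a b '' H = H

/-- An L-subgyrogroup: a subgyrogroup with `gyr a h (H) = H` for all `a ∈ G`, `h ∈ H`. -/
structure IsLSubgyrogroup (G : Type u) [Gyrogroup G] (H : Set G)
    extends IsSubgyrogroup G H : Prop where
  gyr_image_L : ∀ a : G, ∀ h ∈ H, Gyrogroup.gyr a h '' H = H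

/-- The left coset `a ⊕ H`. -/
def lcoset {G : Type u} [Gyrogroup G] (a : G) (H : Set G) : Set G :=
  (fun h => Gyrogroup.add a h) '' H

/-- The equivalence relation identifying points with the same left coset of `H`;
for an L-subgyrogroup the cosets partition `G` and the quotient is the coset space `G/H`,
which carries the quotient topology. -/
def cosetSetoid {G : Type u} [Gyrogroup G] (H : Set G) : Setoid G :=
  ⟨fun a b => lcoset a H = lcoset b H, ⟨fun _ => rfl, Eq.symm, Eq.trans⟩⟩

/-- A topological space is feathered if it contains a nonempty compact subset of
countable character. -/
def Feathered (X : Type u) [TopologicalSpace X] : Prop :=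
  ∃ K : Set X, K.Nonempty ∧ IsCompact K ∧
    ∃ 𝒞 : Set (Set X), 𝒞.Countable ∧
      (∀ U ∈ 𝒞, IsOpen U ∧ K ⊆ U) ∧
      (∀ W : Set X, IsOpen W → K ⊆ W → ∃ U ∈ 𝒞, U ⊆ W)


section GyroAux

namespace GyroAux

open Gyrogroup

variable {G : Type u} [Gyrogroup G]

lemma gyr_inj (x y : G) : Function.Injective (gyr x y) :=
  (Gyrogroup.gyr_bijective x y).1

lemma neg_add_eq_gyr (a x : G) :
    add (neg a) (add a x) = gyr (neg a) a x := by
  rw [Gyrogroup.gyr_assoc (neg a) a x, Gyrogroup.neg_add, Gyrogroup.zero_add]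

lemma gyr_zero_left (y z : G) : gyr Gyrogroup.zero y z = z := by
  have h1 : ∀ w : G, add y w = add y (gyr Gyrogroup.zero y w) := by
    intro w
    have := Gyrogroup.gyr_assoc (Gyrogroup.zero : G) y w
    rwa [Gyrogroup.zero_add, Gyrogroup.zero_add] at this
  have hloop : gyr (Gyrogroup.zero : G) y = gyr (neg y) y := by
    have := Gyrogroup.gyr_left_loop (neg y) y
    rwa [Gyrogroup.neg_add] at this
  have h2 : gyr (Gyrogroup.zero : G) y z = gyr Gyrogroup.zero y (gyr Gyrogroup.zero y z) := by
    have e1 := neg_add_eq_gyr y z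
    have e2 := neg_add_eq_gyr y (gyr Gyrogroup.zero y z)
    rw [← h1 z] at e2
    rw [e1] at e2
    rw [← hloop] at e2
    exact e2
  exact (gyr_inj Gyrogroup.zero y h2.symm)

lemma neg_add_cancel_left (a x : G) : add (neg a) (add a x) = x := by
  rw [neg_add_eq_gyr]
  have hloop : gyr (neg a) a = gyr (Gyrogroup.zero : G) a := by
    have := Gyrogroup.gyr_left_loop (neg a) a
    rw [Gyrogroup.neg_add] at this
    exact this.symm
  rw [hloop, gyr_zero_left]

lemma add_neg_cancel_left (a x : G) : add a (add (neg a) x) = x := by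
  have h := Gyrogroup.gyr_assoc a (neg a) x
  rw [Gyrogroup.add_neg, Gyrogroup.zero_add] at h
  have hloop : gyr a (neg a) = gyr (Gyrogroup.zero : G) (neg a) := by
    have := Gyrogroup.gyr_left_loop a (neg a)
    rw [Gyrogroup.add_neg] at this
    exact this.symm
  rw [h, hloop, gyr_zero_left]

lemma neg_zero' : (neg (Gyrogroup.zero : G)) = Gyrogroup.zero := by
  have := Gyrogroup.neg_unique (Gyrogroup.zero : G) Gyrogroup.zero
    (Gyrogroup.zero_add _) (Gyrogroup.zero_add _)
  exact this.symm

lemma image_add_left (a : G) (B : Set G) :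
    (fun x => add a x) '' B = (fun y => add (neg a) y) ⁻¹' B := by
  ext y
  constructor
  · rintro ⟨b, hb, rfl⟩
    simpa [Set.mem_preimage, neg_add_cancel_left] using hb
  · intro hy
    exact ⟨add (neg a) y, hy, add_neg_cancel_left a y⟩

section Coset

variable {H : Set G}

lemma self_mem_lcoset (hH : IsLSubgyrogroup G H) (a : G) : a ∈ lcoset a H :=
  ⟨Gyrogroup.zero, hH.zero_mem, Gyrogroup.add_zero a⟩

lemma lcoset_add (hH : IsLSubgyrogroup G H) (a h : G) (hh : h ∈ H) :
    lcoset (add a h) H = lcoset a H := by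
  ext y
  constructor
  · rintro ⟨k, hk, rfl⟩
    have : k ∈ gyr a h '' H := by rw [hH.gyr_image_L a h hh]; exact hk
    obtain ⟨z, hz, rfl⟩ := this
    refine ⟨add h z, hH.add_mem h hh z hz, ?_⟩
    show add a (add h z) = add (add a h) (gyr a h z)
    exact Gyrogroup.gyr_assoc a h z
  · rintro ⟨k, hk, rfl⟩
    have hz : add (neg h) k ∈ H := hH.add_mem _ (hH.neg_mem h hh) _ hk
    refine ⟨gyr a h (add (neg h) k), ?_, ?_⟩
    · rw [← hH.gyr_image_L a h hh]
      exact Set.mem_image_of_mem _ hz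
    · show add (add a h) (gyr a h (add (neg h) k)) = add a k
      rw [← Gyrogroup.gyr_assoc a h (add (neg h) k), add_neg_cancel_left]

lemma mem_lcoset_of_eq (hH : IsLSubgyrogroup G H) {a b : G}
    (h : lcoset a H = lcoset b H) : a ∈ lcoset b H := by
  rw [← h]; exact self_mem_lcoset hH a

end Coset

section Topo

variable [TopologicalSpace G]

lemma continuous_add_left (hc : Continuous fun p : G × G => add p.1 p.2) (a : G) :
    Continuous fun x : G => add a x :=
  hc.comp (continuous_const.prodMk continuous_id)

lemma continuous_add_right (hc : Continuous fun p : G × G => add p.1 p.2) (a : G) :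
    Continuous fun x : G => add x a :=
  hc.comp (continuous_id.prodMk continuous_const)

lemma isOpenMap_add_left (hc : Continuous fun p : G × G => add p.1 p.2)
    (hn : Continuous (Gyrogroup.neg : G → G)) (a : G) :
    IsOpenMap fun x : G => add a x := by
  intro U hU
  rw [image_add_left]
  exact hU.preimage (continuous_add_left hc (neg a))

end Topo

end GyroAux

end GyroAux

/-- If `H` is a second-countable closed L-subgyrogroup of a topological
gyrogroup `G` and the quotient space `G/H` is second-countable, then `G` is
second-countable. -/
theorem secondCountable_of_subgyrogroup_and_quotient {G : Type u}
    [TopologicalSpace G] [Gyrogroup G]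
    (hG : IsTopologicalGyrogroup G)
    (H : Set G) (hH : IsLSubgyrogroup G H) (hclosed : IsClosed H)
    (hHsc : SecondCountableTopology ↥H)
    (hQsc : SecondCountableTopology (Quotient (cosetSetoid H))) :
    SecondCountableTopology G := by
  classical
  obtain ⟨hT2, hc, hn⟩ := hG
  haveI := hHsc
  haveI := hQsc
  set Q := Quotient (cosetSetoid H) with hQdef
  let π : G → Q := Quotient.mk (cosetSetoid H)
  have hπq : Topology.IsQuotientMap π := isQuotientMap_quot_mk
  have hπc : Continuous π := hπq.continuous
  have hexact : ∀ {a b : G}, π a = π b → lcoset a H = lcoset b H :=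
    fun h => Quotient.exact h
  have hsound : ∀ {a b : G}, lcoset a H = lcoset b H → π a = π b :=
    fun h => Quotient.sound h
  -- the quotient map is open
  have hπopen : IsOpenMap π := by
    intro U hU
    rw [← hπq.isOpen_preimage]
    have hpre : π ⁻¹' (π '' U) = ⋃ h ∈ H, (fun x => Gyrogroup.add x h) ⁻¹' U := by
      ext x
      simp only [Set.mem_preimage, Set.mem_image, Set.mem_iUnion]
      constructor
      · rintro ⟨u, hu, he⟩
        obtain ⟨h, hh, hxh⟩ := GyroAux.mem_lcoset_of_eq hH (hexact he)
        exact ⟨h, hh, by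
          show Gyrogroup.add x h ∈ U
          have : Gyrogroup.add x h = u := hxh
          rw [this]; exact hu⟩
      · rintro ⟨h, hh, hxU⟩
        exact ⟨Gyrogroup.add x h, hxU, hsound (GyroAux.lcoset_add hH x h hh)⟩
    rw [hpre]
    exact isOpen_biUnion fun h _ => hU.preimage (GyroAux.continuous_add_right hc h)
  -- a countable dense subset of G
  obtain ⟨T, hTc, hTd⟩ := TopologicalSpace.exists_countable_dense Q
  have hliftex : ∀ q : Q, ∃ a : G, π a = q := fun q => Quot.exists_rep q
  choose lift hliftspec using hliftex
  obtain ⟨DH, hDHc, hDHd⟩ := TopologicalSpace.exists_countable_dense (↥H)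
  let D : Set G := Set.image2 (fun q (d : ↥H) => Gyrogroup.add (lift q) (↑d)) T DH
  have hDc : D.Countable := hTc.image2 hDHc _
  have hDdense : ∀ U : Set G, IsOpen U → U.Nonempty → (U ∩ D).Nonempty := by
    intro U hU hne
    obtain ⟨q, hqT, hqU⟩ := hTd.exists_mem_open (hπopen U hU) (hne.image π)
    obtain ⟨u, huU, hπu⟩ := hqU
    have hco : lcoset u H = lcoset (lift q) H := hexact (by rw [hπu, hliftspec])
    obtain ⟨h, hh, hhu⟩ := GyroAux.mem_lcoset_of_eq hH hco
    let S : Set ↥H := {d : ↥H | Gyrogroup.add (lift q) (↑d) ∈ U}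
    have hSopen : IsOpen S :=
      (hU.preimage (GyroAux.continuous_add_left hc (lift q))).preimage continuous_subtype_val
    have hSne : S.Nonempty := ⟨⟨h, hh⟩, by
      show Gyrogroup.add (lift q) h ∈ U
      have : Gyrogroup.add (lift q) h = u := hhu
      rw [this]; exact huU⟩
    obtain ⟨d, hdDH, hdS⟩ := hDHd.exists_mem_open hSopen hSne
    exact ⟨Gyrogroup.add (lift q) (↑d), hdS, Set.mem_image2_of_mem hqT hdDH⟩
  -- a countable neighborhood "scale" at zero coming from H
  have hzeroH : (Gyrogroup.zero : G) ∈ H := hH.zero_mem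
  obtain ⟨BH, hBH⟩ := (nhds (⟨Gyrogroup.zero, hzeroH⟩ : ↥H)).exists_antitone_basis
  have hBHmem : ∀ n, BH n ∈ nhds (⟨Gyrogroup.zero, hzeroH⟩ : ↥H) :=
    fun n => hBH.toHasBasis.mem_of_mem trivial
  have hAex : ∀ n : ℕ, ∃ A : Set G, IsOpen A ∧ Gyrogroup.zero ∈ A ∧
      ∀ y, ∀ hy : y ∈ H, y ∈ A → (⟨y, hy⟩ : ↥H) ∈ BH n := by
    intro n
    have hmem := hBHmem n
    rw [nhds_subtype] at hmem
    obtain ⟨t, htm, hts⟩ := Filter.mem_comap.mp hmem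
    obtain ⟨A, hAt, hAopen, hA0⟩ := mem_nhds_iff.mp htm
    refine ⟨A, hAopen, hA0, fun y hy hyA => hts ?_⟩
    show (⟨y, hy⟩ : ↥H) ∈ (↑) ⁻¹' t
    exact hAt hyA
  choose A hAopen hA0 hAspec using hAex
  have hWex : ∀ n : ℕ, ∃ Wn : Set G, IsOpen Wn ∧ Gyrogroup.zero ∈ Wn ∧
      ∀ a ∈ Wn, ∀ b ∈ Wn, Gyrogroup.add (Gyrogroup.neg a) b ∈ A n := by
    intro n
    have hcont : Continuous fun p : G × G => Gyrogroup.add (Gyrogroup.neg p.1) p.2 :=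
      hc.comp ((hn.comp continuous_fst).prodMk continuous_snd)
    have hpre : (fun p : G × G => Gyrogroup.add (Gyrogroup.neg p.1) p.2) ⁻¹' (A n) ∈
        nhds ((Gyrogroup.zero : G), (Gyrogroup.zero : G)) := by
      apply hcont.continuousAt.preimage_mem_nhds
      show A n ∈ nhds (Gyrogroup.add (Gyrogroup.neg (Gyrogroup.zero : G)) Gyrogroup.zero)
      rw [GyroAux.neg_zero', Gyrogroup.zero_add]
      exact (hAopen n).mem_nhds (hA0 n)
    rw [mem_nhds_prod_iff] at hpre
    obtain ⟨u, hu, v, hv, huv⟩ := hpre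
    obtain ⟨u', hu's, hu'o, hu'0⟩ := mem_nhds_iff.mp hu
    obtain ⟨v', hv's, hv'o, hv'0⟩ := mem_nhds_iff.mp hv
    refine ⟨u' ∩ v', hu'o.inter hv'o, ⟨hu'0, hv'0⟩, fun a ha b hb => ?_⟩
    have hmem : (a, b) ∈ u ×ˢ v := ⟨hu's ha.1, hv's hb.2⟩
    exact huv hmem
  choose W hWopen hW0 hWspec using hWex
  -- countable basis of the quotient
  set cB := TopologicalSpace.countableBasis Q with hcBdef
  have hcBc : cB.Countable := TopologicalSpace.countable_countableBasis Q
  have hcBb := TopologicalSpace.isBasis_countableBasis Q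
  -- the sets  W n ∩ π ⁻¹' O  form a neighborhood base at zero
  have hbase0 : ∀ U : Set G, IsOpen U → Gyrogroup.zero ∈ U →
      ∃ n : ℕ, ∃ O ∈ cB, (Gyrogroup.zero ∈ W n ∩ π ⁻¹' O) ∧ (W n ∩ π ⁻¹' O) ⊆ U := by
    intro U hU hU0
    have hpre : (fun p : G × G => Gyrogroup.add p.1 p.2) ⁻¹' U ∈
        nhds ((Gyrogroup.zero : G), (Gyrogroup.zero : G)) := by
      apply hc.continuousAt.preimage_mem_nhds
      show U ∈ nhds (Gyrogroup.add (Gyrogroup.zero : G) Gyrogroup.zero)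
      rw [Gyrogroup.zero_add]
      exact hU.mem_nhds hU0
    rw [mem_nhds_prod_iff] at hpre
    obtain ⟨u, hu, v, hv, huv⟩ := hpre
    obtain ⟨u', hu's, hu'o, hu'0⟩ := mem_nhds_iff.mp hu
    obtain ⟨v', hv's, hv'o, hv'0⟩ := mem_nhds_iff.mp hv
    set V := u' ∩ v' with hVdef
    have hVopen : IsOpen V := hu'o.inter hv'o
    have hV0 : Gyrogroup.zero ∈ V := ⟨hu'0, hv'0⟩
    have hVadd : ∀ a ∈ V, ∀ b ∈ V, Gyrogroup.add a b ∈ U := by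
      intro a ha b hb
      have hmem : (a, b) ∈ u ×ˢ v := ⟨hu's ha.1, hv's hb.2⟩
      exact huv hmem
    have hVH : (↑) ⁻¹' V ∈ nhds (⟨Gyrogroup.zero, hzeroH⟩ : ↥H) :=
      continuous_subtype_val.continuousAt.preimage_mem_nhds (hVopen.mem_nhds hV0)
    obtain ⟨n, -, hnsub⟩ := hBH.toHasBasis.mem_iff.mp hVH
    have hmemim : π Gyrogroup.zero ∈ π '' (V ∩ W n) :=
      ⟨Gyrogroup.zero, ⟨hV0, hW0 n⟩, rfl⟩
    obtain ⟨O, hOcB, hπ0O, hOsub⟩ :=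
      hcBb.exists_subset_of_mem_open hmemim (hπopen _ (hVopen.inter (hWopen n)))
    refine ⟨n, O, hOcB, ⟨hW0 n, hπ0O⟩, ?_⟩
    rintro x ⟨hxW, hxO⟩
    obtain ⟨v0, ⟨hv0V, hv0W⟩, hπv0⟩ := hOsub hxO
    have hco : lcoset x H = lcoset v0 H := (hexact hπv0).symm
    obtain ⟨h, hh, hhx⟩ := GyroAux.mem_lcoset_of_eq hH hco
    have hhx' : Gyrogroup.add v0 h = x := hhx
    have hhval : h = Gyrogroup.add (Gyrogroup.neg v0) x := by
      rw [← hhx']; exact (GyroAux.neg_add_cancel_left v0 h).symm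
    have hhA : h ∈ A n := by rw [hhval]; exact hWspec n v0 hv0W x hxW
    have hhV : h ∈ V := hnsub (hAspec n h hh hhA)
    rw [← hhx']
    exact hVadd v0 hv0V h hhV
  -- the final countable base
  let F : G × ℕ × Set Q → Set G := fun t =>
    (fun x => Gyrogroup.add t.1 x) '' (W t.2.1 ∩ π ⁻¹' t.2.2)
  let ℬ : Set (Set G) := F '' (D ×ˢ (Set.univ : Set ℕ) ×ˢ cB)
  have hℬc : ℬ.Countable := ((hDc.prod (Set.countable_univ.prod hcBc)).image F)
  have hopen : ∀ u ∈ ℬ, IsOpen u := by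
    rintro _ ⟨⟨d, n, O⟩, ⟨hd, -, hO⟩, rfl⟩
    exact GyroAux.isOpenMap_add_left hc hn d _
      ((hWopen n).inter ((TopologicalSpace.isOpen_of_mem_countableBasis hO).preimage hπc))
  have hnhds : ∀ a u, a ∈ u → IsOpen u → ∃ v ∈ ℬ, a ∈ v ∧ v ⊆ u := by
    intro a u hau hu
    have hpre : (fun p : G × G => Gyrogroup.add p.1 p.2) ⁻¹' u ∈
        nhds (a, (Gyrogroup.zero : G)) := by
      apply hc.continuousAt.preimage_mem_nhds
      show u ∈ nhds (Gyrogroup.add a Gyrogroup.zero)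
      rw [Gyrogroup.add_zero]
      exact hu.mem_nhds hau
    rw [mem_nhds_prod_iff] at hpre
    obtain ⟨N0, hN0, V0, hV0, hNV⟩ := hpre
    obtain ⟨N, hNs, hNo, hNa⟩ := mem_nhds_iff.mp hN0
    obtain ⟨V, hVs, hVo, hV0'⟩ := mem_nhds_iff.mp hV0
    obtain ⟨n, O, hOcB, ⟨hB0W, hB0O⟩, hB0sub⟩ := hbase0 V hVo hV0'
    have hΦo : IsOpen (N ∩ (fun d : G => Gyrogroup.add (Gyrogroup.neg d) a) ⁻¹'
        (W n ∩ π ⁻¹' O)) := by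
      have hcnt : Continuous fun d : G => Gyrogroup.add (Gyrogroup.neg d) a :=
        hc.comp (hn.prodMk continuous_const)
      exact hNo.inter (((hWopen n).inter
        ((TopologicalSpace.isOpen_of_mem_countableBasis hOcB).preimage hπc)).preimage hcnt)
    have hΦa : a ∈ N ∩ (fun d : G => Gyrogroup.add (Gyrogroup.neg d) a) ⁻¹'
        (W n ∩ π ⁻¹' O) := by
      refine ⟨hNa, ?_⟩
      show Gyrogroup.add (Gyrogroup.neg a) a ∈ W n ∩ π ⁻¹' O
      rw [Gyrogroup.neg_add]
      exact ⟨hB0W, hB0O⟩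
    obtain ⟨d, hdΦ, hdD⟩ := hDdense _ hΦo ⟨a, hΦa⟩
    refine ⟨F (d, n, O), ⟨(d, n, O), ⟨hdD, trivial, hOcB⟩, rfl⟩, ?_, ?_⟩
    · exact ⟨Gyrogroup.add (Gyrogroup.neg d) a, hdΦ.2, GyroAux.add_neg_cancel_left d a⟩
    · rintro _ ⟨b, hb, rfl⟩
      have hb' : b ∈ W n ∩ π ⁻¹' O := hb
      have hmem : (d, b) ∈ N0 ×ˢ V0 := ⟨hNs hdΦ.1, hVs (hB0sub hb')⟩
      exact hNV hmem
  exact (TopologicalSpace.isTopologicalBasis_of_isOpen_of_nhds hopen hnhds).secondCountableTopology hℬc
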